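/- arXiv:2004.11723 — 2 statements merged into one kernel-verified Lean document; each statement's English description precedes it below -/
import Mathlib

section
/- (Besicovitch-type covering of exceptional set) Let r : ℂ → ℝ⁺ be a Borel function with d := 2·sup_{z∈ℂ} r(z) < +∞, and let μ be a positive Borel measure on ℂ. Define E := {z ∈ ℂ : ∫₀^{r(z)} μ(D̄(z,t))/t dt > 1}. Then there exists an at most countable family of disks D(z_k, t_k), k = 1,2,…, with z_k ∈ E, t_k ≤ r(z_k), such that E ⊂ ⋃_k D(z_k, t_k), and the multiplicity of the covering is bounded: every point of ℂ lies in at most 2020 of the disks D(z_k, t_k). -/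
open MeasureTheory Filter Metric Set
open scoped ENNReal NNReal

/-- Circular mean `C_v(z,r)` of an extended-real function over the circle of
center `z` and radius `r` (real-valued; the `-∞` set is null in all uses). -/
noncomputable def cMean (v : ℂ → EReal) (z : ℂ) (r : ℝ) : ℝ :=
  (2 * Real.pi)⁻¹ * ∫ θ in (0 : ℝ)..(2 * Real.pi), (v (z + r * Complex.exp (θ * Complex.I))).toReal

/-- Disk (areal) mean `B_v(z,r)`, with the convention `B_v(z,0) = v(z)`. -/
noncomputable def dMean (v : ℂ → EReal) (z : ℂ) (r : ℝ) : ℝ :=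
  if r = 0 then cMean v z 0 else (2 / r ^ 2) * ∫ t in (0 : ℝ)..r, cMean v z t * t

/-- A function is subharmonic on `ℂ`: upper semicontinuous, never `+∞`,
and satisfies the sub-mean inequality on every circle. -/
def Subharmonic (v : ℂ → EReal) : Prop :=
  UpperSemicontinuous v ∧ (∀ z, v z < ⊤) ∧
    ∀ z : ℂ, ∀ r : ℝ, 0 < r → v z ≤ (cMean v z r : EReal)

/-- Second-order directional Laplacian of a smooth test function on `ℂ`. -/
noncomputable def lap (φ : ℂ → ℝ) (z : ℂ) : ℝ :=
  fderiv ℝ (fun w => fderiv ℝ φ w 1) z 1 +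
    fderiv ℝ (fun w => fderiv ℝ φ w Complex.I) z Complex.I

/-- `μ` is the Riesz measure of `u`, i.e. `μ = (1/2π)·Δu` distributionally. -/
def IsRieszMeasure (u : ℂ → EReal) (μ : Measure ℂ) : Prop :=
  ∀ φ : ℂ → ℝ, ContDiff ℝ (⊤ : ℕ∞) φ → HasCompactSupport φ →
    ∫ z, (u z).toReal * lap φ z = 2 * Real.pi * ∫ z, φ z ∂μ

/-- Positive part of an extended real, as an element of `[0,∞]`. -/
noncomputable def ePos (x : EReal) : ℝ≥0∞ := if x = ⊤ then ⊤ else ENNReal.ofReal x.toReal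

/-- The order of growth `ord[m] = limsup_{r→∞} log(1+m⁺(r))/log r ∈ [0,∞]`. -/
noncomputable def ordOf (m : ℝ → EReal) : ℝ≥0∞ :=
  Filter.limsup (fun r =>
    (if ePos (m r) = ⊤ then (⊤ : ℝ≥0∞)
      else ENNReal.ofReal (Real.log (1 + (ePos (m r)).toReal))) /
        ENNReal.ofReal (Real.log r)) Filter.atTop

/-- The type of growth `type_p[m] = limsup_{r→∞} m⁺(r)/r^p ∈ [0,∞]`. -/
noncomputable def typeOf (p : ℝ) (m : ℝ → EReal) : ℝ≥0∞ :=
  Filter.limsup (fun r => ePos (m r) / ENNReal.ofReal (Real.rpow r p)) Filter.atTop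

/-- `log|f|` with the value `-∞` at zeros of `f`. -/
noncomputable def logAbs (f : ℂ → ℂ) (z : ℂ) : EReal :=
  if f z = 0 then ⊥ else ((Real.log ‖f z‖ : ℝ) : EReal)

/-- The radial maximum function `M_v(r) = sup_{|z| ≤ r} v(z)`. -/
noncomputable def mRad (v : ℂ → EReal) (r : ℝ) : EReal := sSup (v '' Metric.closedBall 0 r)

/-- The exceptional set `E = {z : ∫₀^{r(z)} μ(D̄(z,t))/t dt > 1}`. -/
noncomputable def excSet (r : ℂ → ℝ) (μ : Measure ℂ) : Set ℂ :=
  {z : ℂ | 1 < ∫⁻ t in Set.Ioc 0 (r z), μ (Metric.closedBall z t) / ENNReal.ofReal t}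

/-- Besicovitch-type covering of the exceptional set by an at most
countable family of disks of multiplicity at most 2020. -/
theorem besicovitch_cover_of_excSet (r : ℂ → ℝ) (hr0 : ∀ z, 0 ≤ r z)
    (hrm : Measurable r) (hbdd : BddAbove (Set.range r)) (d : ℝ)
    (hd : d = 2 * ⨆ z, r z)
    (μ : Measure ℂ) :
    ∃ K : Set (ℂ × ℝ), K.Countable ∧
      (∀ p ∈ K, p.1 ∈ excSet r μ ∧ p.2 ≤ r p.1) ∧
      excSet r μ ⊆ ⋃ p ∈ K, Metric.ball p.1 p.2 ∧
      ∀ z : ℂ, ({p ∈ K | z ∈ Metric.ball p.1 p.2}).Finite ∧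
        ({p ∈ K | z ∈ Metric.ball p.1 p.2}).ncard ≤ 2020 := by
  classical
  set E := excSet r μ with hE
  -- on the exceptional set, the radius is positive
  have hrpos : ∀ z ∈ E, 0 < r z := by
    intro z hz
    by_contra h
    push_neg at h
    have : Set.Ioc (0:ℝ) (r z) = ∅ := Set.Ioc_eq_empty (by linarith)
    have hz' : (1:ℝ≥0∞) < ∫⁻ t in Set.Ioc 0 (r z),
        μ (Metric.closedBall z t) / ENNReal.ofReal t := hz
    rw [this] at hz'
    simp at hz'
  -- Besicovitch data for ℂ
  set N := Besicovitch.multiplicity ℂ with hN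
  have hNle : N ≤ 2020 := by
    have h1 : N ≤ 5 ^ Module.finrank ℝ ℂ := Besicovitch.multiplicity_le (E := ℂ)
    have h2 : Module.finrank ℝ ℂ = 2 := Complex.finrank_real_complex
    rw [h2] at h1
    omega
  have hτ : 1 < Besicovitch.goodτ ℂ := Besicovitch.one_lt_goodτ ℂ
  have hsat : IsEmpty (Besicovitch.SatelliteConfig ℂ N (Besicovitch.goodτ ℂ)) :=
    Besicovitch.isEmpty_satelliteConfig_multiplicity ℂ
  -- build the ball package indexed by E
  set R : ℝ := sSup (Set.range r) ⊔ 1 with hR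
  have hrub : ∀ z : ℂ, r z ≤ R := fun z =>
    le_trans (le_csSup hbdd ⟨z, rfl⟩) le_sup_left
  let q : Besicovitch.BallPackage E ℂ :=
    { c := fun j => (j : ℂ)
      r := fun j => r (j : ℂ)
      rpos := fun j => hrpos _ j.2
      r_bound := R
      r_le := fun j => hrub _ }
  obtain ⟨s, hdisj, hcov⟩ := Besicovitch.exist_disjoint_covering_families hτ hsat q
  -- the family of disks
  refine ⟨⋃ i : Fin N, (fun j : E => ((j : ℂ), r (j : ℂ))) '' s i, ?_, ?_, ?_, ?_⟩
  · -- countable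
    refine Set.countable_iUnion fun i => Set.Countable.image ?_ _
    refine Set.PairwiseDisjoint.countable_of_nonempty_interior (hdisj i) ?_
    intro j hj
    have hne : (Metric.ball ((j : ℂ)) (r (j : ℂ))).Nonempty :=
      Metric.nonempty_ball.2 (hrpos _ j.2)
    exact hne.mono (interior_maximal Metric.ball_subset_closedBall Metric.isOpen_ball)
  · -- centers in E, radii ≤ r
    rintro p hp
    simp only [Set.mem_iUnion, Set.mem_image] at hp
    obtain ⟨i, j, _, rfl⟩ := hp
    exact ⟨j.2, le_rfl⟩
  · -- covering
    intro z hz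
    have : z ∈ Set.range q.c := ⟨⟨z, hz⟩, rfl⟩
    obtain ⟨i, j, hj, hzj⟩ := by simpa only [Set.mem_iUnion] using hcov this
    have hzj' : z ∈ Metric.ball ((((j : ℂ), r (j : ℂ)) : ℂ × ℝ)).1
        ((((j : ℂ), r (j : ℂ)) : ℂ × ℝ)).2 := hzj
    exact Set.mem_biUnion (Set.mem_iUnion.2 ⟨i, Set.mem_image_of_mem _ hj⟩) hzj'
  · -- multiplicity
    intro z
    set S := {p ∈ ⋃ i : Fin N, (fun j : E => ((j : ℂ), r (j : ℂ))) '' s i |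
        z ∈ Metric.ball p.1 p.2} with hS
    -- injection from S into Fin N
    have key : ∀ p : S, ∃ i : Fin N, ∃ j ∈ s i, ((j : ℂ), r (j : ℂ)) = (p : ℂ × ℝ) := by
      rintro ⟨p, hp, _⟩
      simp only [Set.mem_iUnion, Set.mem_image] at hp
      obtain ⟨i, j, hj, h⟩ := hp
      exact ⟨i, j, hj, h⟩
    choose f g hg hfg using key
    have hzball : ∀ p : S, z ∈ Metric.closedBall ((g p : E) : ℂ) (r ((g p : E) : ℂ)) := by
      intro p
      have : z ∈ Metric.ball (p : ℂ × ℝ).1 (p : ℂ × ℝ).2 := p.2.2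
      rw [← hfg p] at this
      exact Metric.ball_subset_closedBall this
    have hfinj : Function.Injective f := by
      intro p p' h
      have hdj := hdisj (f p)
      have hj : g p = g p' := by
        by_contra hne
        have := hdj (hg p) (h ▸ hg p') hne
        exact (Set.disjoint_left.1 this (hzball p)) (hzball p')
      have : ((p : ℂ × ℝ)) = ((p' : ℂ × ℝ)) := by rw [← hfg p, ← hfg p', hj]
      exact Subtype.ext this
    have hSfin : S.Finite := by
      rw [← Set.finite_coe_iff]
      exact Finite.of_injective f hfinj
    refine ⟨hSfin, ?_⟩
    have h1 : Nat.card S ≤ Nat.card (Fin N) := Nat.card_le_card_of_injective f hfinj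
    have h2 : Nat.card (Fin N) = N := by simp
    rw [← Nat.card_coe_set_eq]
    omega
end

section
/- Let {D(z_k, t_k)}_{k=1,2,…} be a countable family of disks with sup_k t_k ≤ 1 and ∑_{|z_k| ≥ R} t_k = O(R^{-q}) as R → +∞ for some q > 0, and let 0 ≤ q' < q. Then there exists R_q ∈ ℝ⁺ such that for every z ∈ ℂ with |z| > R_q there is a positive number r ≤ (1+|z|)^{-q'} such that the circle of center z and radius r is disjoint from ⋃_k D(z_k, t_k). -/
open MeasureTheory Filter Metric Set
open scoped ENNReal NNReal

lemma key_ineq (C q q' s : ℝ) (hq : 0 < q) (hq'0 : 0 ≤ q') (hs : 5 ≤ s)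
    (hK : 2 * |C| * (2:ℝ) ^ (q + q') < s ^ (q - q')) :
    2 * C / (s - 2) ^ q < (1 + s) ^ (-q') := by
  have hs0 : (0:ℝ) < s := by linarith
  have hd : (0:ℝ) < (s-2) ^ q := Real.rpow_pos_of_pos (by linarith) q
  have hd2 : (0:ℝ) < (s/2) ^ q := Real.rpow_pos_of_pos (by linarith) q
  have hb : (s/2) ^ q ≤ (s-2) ^ q := Real.rpow_le_rpow (by linarith) (by linarith) hq.le
  have h1 : 2 * C / (s - 2) ^ q ≤ 2 * |C| / (s / 2) ^ q := by
    calc 2 * C / (s - 2) ^ q ≤ 2 * |C| / (s - 2) ^ q := by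
          exact (div_le_div_iff_of_pos_right hd).mpr (by linarith [le_abs_self C])
      _ ≤ 2 * |C| / (s / 2) ^ q := by
          exact div_le_div_of_nonneg_left (by positivity) hd2 hb
  have h2 : (2 * s) ^ (-q') ≤ (1 + s) ^ (-q') :=
    Real.rpow_le_rpow_of_nonpos (by linarith) (by linarith) (by linarith)
  have h3 : 2 * |C| / (s / 2) ^ q < (2 * s) ^ (-q') := by
    rw [div_lt_iff₀ hd2]
    have hE : (2*s) ^ (-q') * (s/2) ^ q = s ^ (q-q') * (2:ℝ) ^ (-(q+q')) := by
      rw [Real.mul_rpow two_pos.le hs0.le, div_eq_mul_inv,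
        Real.mul_rpow hs0.le (by positivity), Real.inv_rpow two_pos.le,
        ← Real.rpow_neg two_pos.le]
      calc (2:ℝ)^(-q') * s^(-q') * (s^q * 2^(-q))
          = (s^(-q') * s^q) * ((2:ℝ)^(-q') * 2^(-q)) := by ring
        _ = s^(q-q') * (2:ℝ)^(-(q+q')) := by
            rw [← Real.rpow_add hs0, ← Real.rpow_add two_pos]; ring_nf
    rw [hE]
    have hcanc : (2:ℝ)^(q+q') * (2:ℝ)^(-(q+q')) = 1 := by
      rw [← Real.rpow_add two_pos, add_neg_cancel, Real.rpow_zero]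
    have h4 := mul_lt_mul_of_pos_right hK (Real.rpow_pos_of_pos two_pos (-(q+q')))
    have h5 : 2 * |C| = 2 * |C| * (2:ℝ)^(q+q') * (2:ℝ)^(-(q+q')) := by
      rw [mul_assoc, hcanc, mul_one]
    linarith
  linarith

/-- if `sup t_k ≤ 1` and tails `∑_{|z_k|≥R} t_k = O(R^{-q})`, then for
`0 ≤ q' < q` every far enough `z` has a circle of radius `r ≤ (1+|z|)^{-q'}`
avoiding all the disks. -/

theorem exists_small_avoiding_circle (c : ℕ → ℂ) (t : ℕ → ℝ)
    (ht : ∀ k, 0 ≤ t k ∧ t k ≤ 1) (q q' : ℝ) (hq : 0 < q) (hq'0 : 0 ≤ q') (hq' : q' < q)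
    (htail : ∃ C R₁ : ℝ, ∀ R ≥ R₁,
      (∑' k : {k : ℕ // R ≤ ‖c k‖}, ENNReal.ofReal (t ↑k))
        ≤ ENNReal.ofReal (C / Real.rpow R q)) :
    ∃ Rq : ℝ, 0 ≤ Rq ∧ ∀ z : ℂ, Rq < ‖z‖ →
      ∃ r : ℝ, 0 < r ∧ r ≤ Real.rpow (1 + ‖z‖) (-q') ∧
        Metric.sphere z r ∩ (⋃ k, Metric.ball (c k) (t k)) = ∅ := by
  obtain ⟨C, R₁, htail⟩ := htail
  set e : ℝ := q - q' with he_def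
  have he : 0 < e := by simp [he_def]; linarith
  set A : ℝ := max 1 (2 * |C| * (2:ℝ) ^ (q + q')) with hA_def
  have hA1 : 1 ≤ A := le_max_left _ _
  have hA0 : 0 < A := lt_of_lt_of_le one_pos hA1
  refine ⟨max (max (R₁ + 2) 5) (A ^ (1/e)), ?_, ?_⟩
  · exact le_trans (by norm_num) (le_trans (le_max_right _ 5) (le_max_left _ _))
  intro z hz
  set s : ℝ := ‖z‖ with hs_def
  have hs5 : 5 ≤ s := le_of_lt (lt_of_le_of_lt (le_trans (le_max_right _ 5) (le_max_left _ _)) hz)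
  have hsR₁ : R₁ ≤ s - 2 :=
    by have := lt_of_le_of_lt (le_trans (le_max_left (R₁+2) 5) (le_max_left _ _)) hz; linarith
  have hs0 : (0:ℝ) < s := by linarith
  -- key exponent inequality
  have hAe : A ^ (1/e) < s := lt_of_le_of_lt (le_max_right _ _) hz
  have hApow : A < s ^ e := by
    have h0 : (0:ℝ) ≤ A ^ (1/e) := (Real.rpow_pos_of_pos hA0 _).le
    have := Real.rpow_lt_rpow h0 hAe he
    rwa [← Real.rpow_mul hA0.le, one_div_mul_cancel he.ne', Real.rpow_one] at this
  have hK : 2 * |C| * (2:ℝ) ^ (q + q') < s ^ (q - q') :=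
    lt_of_le_of_lt (le_max_right 1 _) hApow
  have hreal : 2 * C / (s - 2) ^ q < (1 + s) ^ (-q') :=
    key_ineq C q q' s hq hq'0 hs5 hK
  set ρ : ℝ := (1 + s) ^ (-q') with hρ_def
  have hρ0 : 0 < ρ := Real.rpow_pos_of_pos (by linarith) _
  have hρ1 : ρ ≤ 1 := Real.rpow_le_one_of_one_le_of_nonpos (by linarith) (by linarith)
  -- bad set
  set E : ℕ → Set ℝ := fun k => if s - 2 ≤ ‖c k‖
    then Ioo (dist (c k) z - t k) (dist (c k) z + t k) else ∅ with hE_def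
  have hmeas : volume (⋃ k, E k) < volume (Ioc (0:ℝ) ρ) := by
    calc volume (⋃ k, E k) ≤ ∑' k, volume (E k) := measure_iUnion_le _
      _ ≤ ∑' k, Set.indicator {k | s - 2 ≤ ‖c k‖}
            (fun k => ENNReal.ofReal (2 * t k)) k := by
          refine ENNReal.tsum_le_tsum fun k => ?_
          by_cases hk : s - 2 ≤ ‖c k‖
          · rw [hE_def]
            simp only [if_pos hk]
            simp only [Set.indicator, Set.mem_setOf_eq, if_pos hk]
            rw [Real.volume_Ioo]
            exact le_of_eq (by congr 1; ring)
          · rw [hE_def]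
            simp only [if_neg hk]
            simp only [Set.indicator, Set.mem_setOf_eq, if_neg hk]
            simp
      _ = ∑' k : {k : ℕ // s - 2 ≤ ‖c k‖}, ENNReal.ofReal (2 * t ↑k) :=
          (tsum_subtype _ _).symm
      _ = 2 * ∑' k : {k : ℕ // s - 2 ≤ ‖c k‖}, ENNReal.ofReal (t ↑k) := by
          rw [← ENNReal.tsum_mul_left]
          congr 1; funext k
          rw [ENNReal.ofReal_mul (by norm_num : (0:ℝ) ≤ 2), ENNReal.ofReal_ofNat]
      _ ≤ 2 * ENNReal.ofReal (C / Real.rpow (s - 2) q) := by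
          exact mul_le_mul_right (htail (s - 2) hsR₁) 2
      _ < volume (Ioc (0:ℝ) ρ) := by
          rw [Real.volume_Ioc, sub_zero, ← ENNReal.ofReal_ofNat,
            ← ENNReal.ofReal_mul (by norm_num : (0:ℝ) ≤ 2), ← mul_div_assoc]
          exact (ENNReal.ofReal_lt_ofReal_iff hρ0).mpr hreal
  have hnotsub : ¬ Ioc (0:ℝ) ρ ⊆ ⋃ k, E k := fun h => absurd (measure_mono h) (not_le.2 hmeas)
  obtain ⟨r, hrI, hrB⟩ := Set.not_subset.1 hnotsub
  refine ⟨r, hrI.1, hrI.2, ?_⟩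
  rw [Set.eq_empty_iff_forall_notMem]
  rintro w ⟨hw1, hw2⟩
  rw [Set.mem_iUnion] at hw2
  obtain ⟨k, hwk⟩ := hw2
  rw [Metric.mem_sphere] at hw1
  rw [Metric.mem_ball] at hwk
  have habs : |dist (c k) z - r| < t k := by
    rw [← hw1]
    calc |dist (c k) z - dist w z| ≤ dist (c k) w := abs_dist_sub_le _ _ _
      _ = dist w (c k) := dist_comm _ _
      _ < t k := hwk
  rw [abs_lt] at habs
  by_cases hk : s - 2 ≤ ‖c k‖
  · exact hrB (Set.mem_iUnion.2 ⟨k, by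
      simp only [hE_def, hk, if_pos, Set.mem_Ioo]
      constructor <;> linarith [habs.1, habs.2]⟩)
  · push_neg at hk
    have hd2 : 2 < dist (c k) z := by
      have h1 : dist z 0 ≤ dist z (c k) + dist (c k) 0 := dist_triangle _ _ _
      rw [dist_zero_right, dist_zero_right,
        ← hs_def] at h1
      rw [dist_comm]
      linarith
    have := (ht k).2
    linarith [hrI.2, habs.2]
end
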